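/- Let f_1, …, f_K : ℝ^d → ℝ each be convex and differentiable with L-Lipschitz gradient, let f := (1/K) Σ_{k=1}^K f_k, and fix x⋆ ∈ ℝ^d. Define σ² := (1/K) Σ_{k=1}^K ‖∇f_k(x⋆) − ∇f(x⋆)‖². Then for all x ∈ ℝ^d, the second moment of the uniformly-sampled gradient estimator satisfies (1/K) Σ_{k=1}^K ‖∇f_k(x) − ∇f(x⋆)‖² ≤ 4L · D_f(x, x⋆) + 2σ², where D_f(x, y) := f(x) − f(y) − ⟨∇f(y), x − y⟩ is the Bregman divergence of f. -/

import Mathlib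

open scoped RealInnerProductSpace BigOperators

section Aux

variable {d : ℕ}

local notation "E" => EuclideanSpace ℝ (Fin d)

/-- derivative along a line -/
lemma hasDerivAt_line (φ : E → ℝ) (hφ : Differentiable ℝ φ) (y v : E) (t : ℝ) :
    HasDerivAt (fun s : ℝ => φ (y + s • v)) ⟪gradient φ (y + t • v), v⟫ t := by
  have hc : HasDerivAt (fun s : ℝ => y + s • v) v t := by
    simpa using ((hasDerivAt_id t).smul_const v).const_add y
  have hφ' : HasFDerivAt φ (InnerProductSpace.toDual ℝ _ (gradient φ (y + t • v))) (y + t • v) :=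
    (hφ (y + t • v)).hasGradientAt.hasFDerivAt
  have := hφ'.comp_hasDerivAt t hc
  simpa [InnerProductSpace.toDual_apply_apply, Function.comp_def] using this

/-- first-order condition for convexity -/
lemma convex_first_order (φ : E → ℝ) (hconv : ConvexOn ℝ Set.univ φ)
    (hφ : Differentiable ℝ φ) (x y : E) :
    φ y + ⟪gradient φ y, x - y⟫ ≤ φ x := by
  set g : ℝ → ℝ := fun t => φ (y + t • (x - y)) with hg
  have hgc : ConvexOn ℝ Set.univ g := by
    have h := hconv.comp_affineMap (AffineMap.lineMap y x : ℝ →ᵃ[ℝ] E)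
    have he : g = φ ∘ (AffineMap.lineMap y x : ℝ →ᵃ[ℝ] E) := by
      funext t
      simp [hg, Function.comp, AffineMap.lineMap_apply, add_comm]
    rw [he]
    simpa using h
  have h0 : HasDerivAt g ⟪gradient φ y, x - y⟫ 0 := by
    have := hasDerivAt_line φ hφ y (x - y) 0
    simpa using this
  have := hgc.le_slope_of_hasDerivAt (Set.mem_univ (0:ℝ)) (Set.mem_univ (1:ℝ)) one_pos h0
  have hslope : slope g 0 1 = φ x - φ y := by
    simp [slope_def_field, hg]
  rw [hslope] at this
  linarith

/-- descent lemma -/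
lemma descent_lemma (φ : E → ℝ) (hφ : Differentiable ℝ φ) (L : ℝ) (hL : 0 < L)
    (hlip : ∀ a b : E, ‖gradient φ a - gradient φ b‖ ≤ L * ‖a - b‖) (x y : E) :
    φ x ≤ φ y + ⟪gradient φ y, x - y⟫ + L / 2 * ‖x - y‖ ^ 2 := by
  set v : E := x - y with hv
  set a : ℝ := ⟪gradient φ y, v⟫ with ha
  set c : ℝ := L * ‖v‖ ^ 2 with hc
  set ψ : ℝ → ℝ := fun t => φ (y + t • v) - t * a - c / 2 * t ^ 2 with hψ
  have hψd : ∀ t : ℝ, HasDerivAt ψ (⟪gradient φ (y + t • v), v⟫ - a - c * t) t := by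
    intro t
    have h1 := hasDerivAt_line φ hφ y v t
    have h2 : HasDerivAt (fun t : ℝ => t * a) a t := by
      simpa using (hasDerivAt_id t).mul_const a
    have hp : HasDerivAt (fun s : ℝ => s ^ 2) (2 * t) t := by
      simpa using hasDerivAt_pow 2 t
    have h3 : HasDerivAt (fun s : ℝ => c / 2 * s ^ 2) (c / 2 * (2 * t)) t :=
      hp.const_mul (c / 2)
    have hcomb := (h1.sub h2).sub h3
    have heq : ⟪gradient φ (y + t • v), v⟫ - a - c / 2 * (2 * t)
        = ⟪gradient φ (y + t • v), v⟫ - a - c * t := by ring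
    rw [heq] at hcomb
    exact hcomb
  have hanti : AntitoneOn ψ (Set.Icc 0 1) := by
    apply antitoneOn_of_deriv_nonpos (convex_Icc 0 1)
    · exact fun t _ => ((hψd t).differentiableAt).continuousAt.continuousWithinAt
    · exact fun t _ => ((hψd t).differentiableAt).differentiableWithinAt
    · intro t ht
      rw [interior_Icc] at ht
      rw [(hψd t).deriv]
      have hb : ⟪gradient φ (y + t • v) - gradient φ y, v⟫ ≤ c * t := by
        calc ⟪gradient φ (y + t • v) - gradient φ y, v⟫
            ≤ ‖gradient φ (y + t • v) - gradient φ y‖ * ‖v‖ := real_inner_le_norm _ _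
          _ ≤ (L * ‖(y + t • v) - y‖) * ‖v‖ := by
              gcongr
              exact hlip _ _
          _ = c * t := by
              have : ‖(y + t • v) - y‖ = t * ‖v‖ := by
                simp [norm_smul, abs_of_pos ht.1]
              rw [this, hc]; ring
      have : ⟪gradient φ (y + t • v), v⟫ - a = ⟪gradient φ (y + t • v) - gradient φ y, v⟫ := by
        rw [inner_sub_left, ha]
      linarith [hb, this.le, this.ge]
  have h01 := hanti (Set.mem_Icc.mpr ⟨le_refl 0, zero_le_one⟩)
    (Set.mem_Icc.mpr ⟨zero_le_one, le_refl 1⟩) zero_le_one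
  have h0 : ψ 0 = φ y := by simp [hψ]
  have h1 : ψ 1 = φ x - a - c / 2 := by simp [hψ, hv]
  rw [h0, h1] at h01
  have : φ x ≤ φ y + a + c / 2 := by linarith
  calc φ x ≤ φ y + a + c / 2 := this
    _ = φ y + ⟪gradient φ y, x - y⟫ + L / 2 * ‖x - y‖ ^ 2 := by rw [ha, hc, hv]; ring

/-- co-coercivity: key smooth+convex inequality -/
lemma cocoercivity (φ : E → ℝ) (hconv : ConvexOn ℝ Set.univ φ)
    (hφ : Differentiable ℝ φ) (L : ℝ) (hL : 0 < L)
    (hlip : ∀ a b : E, ‖gradient φ a - gradient φ b‖ ≤ L * ‖a - b‖) (x y : E) :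
    ‖gradient φ x - gradient φ y‖ ^ 2
      ≤ 2 * L * (φ x - φ y - ⟪gradient φ y, x - y⟫) := by
  set g : E := gradient φ x - gradient φ y with hgdef
  set z : E := x - (1 / L) • g with hz
  have h1 : φ y + ⟪gradient φ y, z - y⟫ ≤ φ z := convex_first_order φ hconv hφ z y
  have h2 : φ z ≤ φ x + ⟪gradient φ x, z - x⟫ + L / 2 * ‖z - x‖ ^ 2 :=
    descent_lemma φ hφ L hL hlip z x
  have hzx : z - x = -((1 / L) • g) := by rw [hz]; abel
  have hzy : z - y = (x - y) - (1 / L) • g := by rw [hz]; abel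
  have e1 : ⟪gradient φ x, z - x⟫ = -(1 / L) * ⟪gradient φ x, g⟫ := by
    rw [hzx, inner_neg_right, real_inner_smul_right]; ring
  have e2 : ⟪gradient φ y, z - y⟫ = ⟪gradient φ y, x - y⟫ - (1 / L) * ⟪gradient φ y, g⟫ := by
    rw [hzy, inner_sub_right, real_inner_smul_right]
  have e3 : L / 2 * ‖z - x‖ ^ 2 = 1 / (2 * L) * ‖g‖ ^ 2 := by
    rw [hzx, norm_neg, norm_smul, Real.norm_eq_abs, abs_of_pos (by positivity : (0:ℝ) < 1 / L)]
    field_simp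
  have e4 : ⟪gradient φ x, g⟫ - ⟪gradient φ y, g⟫ = ‖g‖ ^ 2 := by
    rw [← inner_sub_left, ← hgdef, real_inner_self_eq_norm_sq]
  have eAB : 1 / L * ⟪gradient φ x, g⟫ - 1 / L * ⟪gradient φ y, g⟫ = 1 / L * ‖g‖ ^ 2 := by
    rw [← e4]; ring
  have step : 1 / L * ‖g‖ ^ 2 - 1 / (2 * L) * ‖g‖ ^ 2
      ≤ φ x - φ y - ⟪gradient φ y, x - y⟫ := by
    rw [e1] at h2
    rw [e2] at h1
    rw [e3] at h2
    linarith [h1, h2, eAB]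
  have hfrac : 1 / L * ‖g‖ ^ 2 - 1 / (2 * L) * ‖g‖ ^ 2 = ‖g‖ ^ 2 / (2 * L) := by
    field_simp
    ring
  rw [hfrac] at step
  have := (div_le_iff₀ (by positivity : (0:ℝ) < 2 * L)).mp step
  linarith

lemma gradient_avg (K : ℕ) (fk : Fin K → E → ℝ)
    (hdiff : ∀ k, Differentiable ℝ (fk k)) (c : ℝ)
    (f : E → ℝ) (hf : f = fun x => c * ∑ k : Fin K, fk k x) (z : E) :
    gradient f z = c • ∑ k : Fin K, gradient (fk k) z := by
  have hsum : HasFDerivAt (fun x => ∑ k : Fin K, fk k x)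
      (∑ k : Fin K, InnerProductSpace.toDual ℝ _ (gradient (fk k) z)) z :=
    HasFDerivAt.fun_sum fun k _ => (hdiff k z).hasGradientAt.hasFDerivAt
  have hmul : HasFDerivAt f
      (c • ∑ k : Fin K, InnerProductSpace.toDual ℝ _ (gradient (fk k) z)) z := by
    rw [hf]
    exact hsum.const_mul c
  have : HasGradientAt f (c • ∑ k : Fin K, gradient (fk k) z) z := by
    rw [hasGradientAt_iff_hasFDerivAt]
    convert hmul using 1
    · rfl
    · rfl
    simp [map_smul, map_sum]
  exact this.gradient

end Aux

/-- Bregman divergence of a differentiable function `f` on `ℝ^d`. -/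
noncomputable def bregman {d : ℕ} (f : EuclideanSpace ℝ (Fin d) → ℝ)
    (x y : EuclideanSpace ℝ (Fin d)) : ℝ :=
  f x - f y - ⟪gradient f y, x - y⟫

theorem sgd_second_moment_bound {d K : ℕ} (hK : 0 < K)
    (fk : Fin K → EuclideanSpace ℝ (Fin d) → ℝ) (L : ℝ) (hL : 0 < L)
    (hconv : ∀ k, ConvexOn ℝ Set.univ (fk k))
    (hdiff : ∀ k, Differentiable ℝ (fk k))
    (hlip : ∀ k, ∀ x y, ‖gradient (fk k) x - gradient (fk k) y‖ ≤ L * ‖x - y‖)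
    (f : EuclideanSpace ℝ (Fin d) → ℝ)
    (hf : f = fun x => (1 / (K : ℝ)) * ∑ k : Fin K, fk k x)
    (xstar : EuclideanSpace ℝ (Fin d)) (σ2 : ℝ)
    (hσ2 : σ2 = (1 / (K : ℝ)) * ∑ k : Fin K, ‖gradient (fk k) xstar - gradient f xstar‖ ^ 2) :
    ∀ x : EuclideanSpace ℝ (Fin d),
      (1 / (K : ℝ)) * ∑ k : Fin K, ‖gradient (fk k) x - gradient f xstar‖ ^ 2
        ≤ 4 * L * bregman f x xstar + 2 * σ2 := by
  intro x
  set c : ℝ := 1 / (K : ℝ) with hc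
  have hc0 : 0 < c := by
    rw [hc]
    positivity
  set G : EuclideanSpace ℝ (Fin d) := gradient f xstar with hG
  -- Bregman of f is average of Bregmans of fk
  have hgradstar : gradient f xstar = c • ∑ k : Fin K, gradient (fk k) xstar :=
    gradient_avg K fk hdiff c f hf xstar
  have hbreg : bregman f x xstar = c * ∑ k : Fin K, bregman (fk k) x xstar := by
    have hfx : f x = c * ∑ k : Fin K, fk k x := by rw [hf]
    have hfs : f xstar = c * ∑ k : Fin K, fk k xstar := by rw [hf]
    rw [bregman, hfx, hfs, hgradstar, real_inner_smul_left, sum_inner]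
    simp only [bregman, Finset.mul_sum]
    rw [← Finset.sum_sub_distrib, ← Finset.sum_sub_distrib]
    exact Finset.sum_congr rfl fun k _ => by ring
  -- pointwise bound
  have hpoint : ∀ k : Fin K, ‖gradient (fk k) x - G‖ ^ 2
      ≤ 4 * L * bregman (fk k) x xstar + 2 * ‖gradient (fk k) xstar - G‖ ^ 2 := by
    intro k
    have hco : ‖gradient (fk k) x - gradient (fk k) xstar‖ ^ 2
        ≤ 2 * L * bregman (fk k) x xstar := by
      have := cocoercivity (fk k) (hconv k) (hdiff k) L hL (hlip k) x xstar
      simpa [bregman] using this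
    have htri : ‖gradient (fk k) x - G‖
        ≤ ‖gradient (fk k) x - gradient (fk k) xstar‖ + ‖gradient (fk k) xstar - G‖ := by
      have : gradient (fk k) x - G =
          (gradient (fk k) x - gradient (fk k) xstar) + (gradient (fk k) xstar - G) := by abel
      rw [this]
      exact norm_add_le _ _
    nlinarith [norm_nonneg (gradient (fk k) x - G),
      norm_nonneg (gradient (fk k) x - gradient (fk k) xstar),
      norm_nonneg (gradient (fk k) xstar - G),
      sq_nonneg (‖gradient (fk k) x - gradient (fk k) xstar‖ - ‖gradient (fk k) xstar - G‖)]
  -- sum up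
  have hsum : ∑ k : Fin K, ‖gradient (fk k) x - G‖ ^ 2
      ≤ ∑ k : Fin K, (4 * L * bregman (fk k) x xstar + 2 * ‖gradient (fk k) xstar - G‖ ^ 2) :=
    Finset.sum_le_sum fun k _ => hpoint k
  have := mul_le_mul_of_nonneg_left hsum hc0.le
  calc c * ∑ k : Fin K, ‖gradient (fk k) x - G‖ ^ 2
      ≤ c * ∑ k : Fin K, (4 * L * bregman (fk k) x xstar
          + 2 * ‖gradient (fk k) xstar - G‖ ^ 2) := this
    _ = 4 * L * (c * ∑ k : Fin K, bregman (fk k) x xstar)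
          + 2 * (c * ∑ k : Fin K, ‖gradient (fk k) xstar - G‖ ^ 2) := by
        rw [Finset.sum_add_distrib, ← Finset.mul_sum, ← Finset.mul_sum]
        ring
    _ = 4 * L * bregman f x xstar + 2 * σ2 := by rw [← hbreg, hσ2]
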